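/- Let n, m be natural numbers with m ≤ C(n,2). For every finite simple graph G with n vertices and m edges, the number of acyclic orientations of G is at least the number of acyclic orientations of H_{n,m}, i.e. a(G) ≥ a(H_{n,m}). -/

import Mathlib

/-!
Write `a(G)` for the number of acyclic orientations and `G - v` for `G` with the edges at `v`
removed. Sending an acyclic orientation of `G` to its restriction to `G - v` together with the
number of edges it directs into `v` is onto `AO(G - v) × {0, …, deg v}`, so
`(deg v + 1) a(G - v) ≤ a(G)`; when the neighbours of `v` form a clique it is also one-to-one, as
the in-neighbours of `v` must then be an initial segment of the neighbourhood, linearly ordered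
by the orientation.

Peeling the vertices `k, k - 1, …, 1` off `H_{n,m}` this way gives `a(H_{n,m}) ≤ k! (r + 1)`.
For an arbitrary `G` with `m = C(k,2) + r` edges, delete the edges at a vertex of least positive
degree `d`; then `d (d + 1) ≤ 2m`, and induction on `m` gives `k! (r + 1) ≤ a(G)`.
-/

open SimpleGraph

/-- The graph `H_{n,m}` on `n` vertices, where `k` is the unique integer with
`C(k,2) ≤ m < C(k+1,2)` and `r = m - C(k,2)`: a clique on the `k` vertices `0, …, k-1`, one
additional vertex `k` adjacent to exactly `r` of the clique vertices (when `r > 0`), and all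
remaining vertices isolated. -/
def graphHnm (n k r : ℕ) : SimpleGraph (Fin n) where
  Adj a b := a ≠ b ∧
    ((a.val < k ∧ b.val < k) ∨ (a.val = k ∧ b.val < r) ∨ (b.val = k ∧ a.val < r))
  symm := ⟨by
    rintro a b ⟨hab, h⟩
    exact ⟨hab.symm, by tauto⟩⟩
  loopless := ⟨fun a h => h.1 rfl⟩

/-- An orientation of a simple graph `G`: a relation `θ` on the vertices such that for adjacent
vertices exactly one of `θ a b`, `θ b a` holds, and for non-adjacent (or equal) vertices
neither holds. -/
def IsOrientation {V : Type*} (G : SimpleGraph V) (θ : V → V → Prop) : Prop :=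
  ∀ a b : V, (G.Adj a b → (θ a b ↔ ¬ θ b a)) ∧ (¬ G.Adj a b → ¬ θ a b)

/-- A relation is acyclic if its digraph has no directed cycle, i.e. its transitive closure is
irreflexive. -/
def RelAcyclic {V : Type*} (θ : V → V → Prop) : Prop :=
  ∀ v, ¬ Relation.TransGen θ v v

/-- `a(G)`, the number of acyclic orientations of `G`. -/
noncomputable def numAcyclicOrientations {V : Type*} (G : SimpleGraph V) : ℕ :=
  Nat.card {θ : V → V → Prop // IsOrientation G θ ∧ RelAcyclic θ}

open Finset Function
open scoped Nat

variable {V : Type*}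

theorem relAcyclic_of_forall_rel_lt {α : Type*} [Preorder α] {θ : V → V → Prop} (f : V → α)
    (hf : ∀ a b, θ a b → f a < f b) : RelAcyclic θ := fun v hv =>
  lt_irrefl (f v) <| by
    simpa only [Relation.transGen_eq_self] using Relation.TransGen.lift (p := (· < ·)) f hf v v hv

theorem RelAcyclic.mono {θ θ' : V → V → Prop} (hθ : RelAcyclic θ) (h : θ' ≤ θ) :
    RelAcyclic θ' := fun v hv => hθ v (Relation.TransGen.mono h _ _ hv)

theorem RelAcyclic.exists_injective_forall_rel_lt [Finite V] {θ : V → V → Prop}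
    (hθ : RelAcyclic θ) :
    ∃ f : V → ℕ, Injective f ∧ ∀ a b, θ a b → f a < f b := by
  obtain ⟨N, ⟨e⟩⟩ := Finite.exists_equiv_fin V
  set height : V → ℕ := fun u => {w | Relation.TransGen θ w u}.ncard
  have height_lt : ∀ a b, θ a b → height a < height b := fun a b hab =>
    Set.ncard_lt_ncard ((Set.ssubset_iff_of_subset fun w hw => hw.tail hab).mpr
      ⟨a, .single hab, hθ a⟩) (Set.toFinite _)
  refine ⟨fun u => e u + N * height u, fun a b hab => e.injective (Fin.ext ?_), fun a b hab => ?_⟩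
  · simpa [Nat.add_mul_mod_self_left, Nat.mod_eq_of_lt] using congrArg (· % N) hab
  · calc (e a : ℕ) + N * height a < N * (height a + 1) := by rw [mul_add_one]; omega
      _ ≤ N * height b := Nat.mul_le_mul_left N (height_lt a b hab)
      _ ≤ e b + N * height b := le_add_self

-- `t ↦ #{u ∈ s | f u < t}` increases by at most one per step, so it takes every value up to `#s`.
theorem exists_card_filter_lt_eq (s : Finset V) {f : V → ℕ} (hf : Set.InjOn f s) {j : ℕ}
    (hj : j ≤ #s) : ∃ t, #{u ∈ s | f u < t} = j := by
  classical
  have step : ∀ t, #{u ∈ s | f u < t + 1} ≤ #{u ∈ s | f u < t} + 1 := fun t => by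
    have hsplit : {u ∈ s | f u < t + 1} = {u ∈ s | f u < t} ∪ {u ∈ s | f u = t} := by
      ext u; simp only [mem_filter, mem_union, Nat.lt_succ_iff_lt_or_eq]; tauto
    have hle : #{u ∈ s | f u = t} ≤ 1 := card_le_one.mpr fun a ha b hb => by
      simp only [mem_filter] at ha hb
      exact hf ha.1 hb.1 (ha.2.trans hb.2.symm)
    rw [hsplit]
    exact (card_union_le _ _).trans (Nat.add_le_add_left hle _)
  have hex : ∃ t, j ≤ #{u ∈ s | f u < t} := ⟨s.sup f + 1, hj.trans_eq (by
    rw [filter_true_of_mem fun u hu => Nat.lt_succ_of_le (le_sup (f := f) hu)])⟩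
  refine ⟨Nat.find hex, le_antisymm ?_ (Nat.find_spec hex)⟩
  rcases h : Nat.find hex with _ | t
  · simp
  · have := Nat.find_min hex (h ▸ Nat.lt_succ_self t : t < Nat.find hex)
    have := step t
    omega

namespace SimpleGraph

variable (G : SimpleGraph V)

abbrev AcyclicOrientation : Type _ := {θ : V → V → Prop // IsOrientation G θ ∧ RelAcyclic θ}

variable {G}

theorem IsOrientation.adj {θ : V → V → Prop} (hθ : IsOrientation G θ) {a b : V} (hab : θ a b) :
    G.Adj a b :=
  by_contra fun h => (hθ a b).2 h hab

theorem IsOrientation.rel_of_not_rel {θ : V → V → Prop} (hθ : IsOrientation G θ) {a b : V}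
    (hab : G.Adj a b) (hba : ¬ θ b a) : θ a b :=
  ((hθ a b).1 hab).2 hba

theorem IsOrientation.eq_of_le {θ₁ θ₂ : V → V → Prop} (h₁ : IsOrientation G θ₁)
    (h₂ : IsOrientation G θ₂) (hle : θ₁ ≤ θ₂) : θ₁ = θ₂ := by
  funext a b
  refine propext ⟨hle a b, fun hab => by_contra fun hn => ?_⟩
  exact ((h₂ a b).1 (h₂.adj hab)).1 hab (hle b a (h₁.rel_of_not_rel (h₂.adj hab).symm hn))

theorem IsOrientation.restrict {θ : V → V → Prop} (hθ : IsOrientation G θ) {H : SimpleGraph V}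
    (hHG : H ≤ G) : IsOrientation H (fun a b => H.Adj a b ∧ θ a b) := fun a b =>
  ⟨fun hab => by simp only [hab, hab.symm, true_and]; exact (hθ a b).1 (hHG hab),
    fun hab h => hab h.1⟩

theorem AcyclicOrientation.not_rel_of_rel_of_not_rel (θ : G.AcyclicOrientation) {u v w : V}
    (huv : θ.1 u v) (hwv : G.Adj w v) (hnwv : ¬ θ.1 w v) : ¬ θ.1 w u := fun hwu =>
  θ.2.2 u (.tail (.tail (.single huv) (θ.2.1.rel_of_not_rel hwv.symm hnwv)) hwu)

variable (G)

def inducedOrientation {α : Type*} [LT α] (f : V → α) : V → V → Prop :=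
  fun a b => G.Adj a b ∧ f a < f b

theorem isOrientation_inducedOrientation {α : Type*} [LinearOrder α] {f : V → α}
    (hf : Injective f) : IsOrientation G (G.inducedOrientation f) := fun a b =>
  ⟨fun hab => by
    simp only [inducedOrientation, hab, hab.symm, true_and, not_lt]
    exact ⟨le_of_lt, fun h => h.lt_of_ne (hf.ne hab.ne)⟩,
    fun hab h => hab h.1⟩

theorem relAcyclic_inducedOrientation {α : Type*} [Preorder α] (f : V → α) :
    RelAcyclic (G.inducedOrientation f) :=
  relAcyclic_of_forall_rel_lt f fun _ _ h => h.2

theorem one_le_numAcyclicOrientations [Finite V] : 1 ≤ numAcyclicOrientations G := by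
  obtain ⟨f, hf⟩ := Countable.exists_injective_nat V
  have : Nonempty G.AcyclicOrientation :=
    ⟨⟨_, G.isOrientation_inducedOrientation hf, G.relAcyclic_inducedOrientation f⟩⟩
  exact Nat.card_pos

theorem numAcyclicOrientations_bot : numAcyclicOrientations (⊥ : SimpleGraph V) = 1 :=
  Nat.card_eq_one_iff_exists.mpr ⟨⟨fun _ _ => False, fun _ _ => ⟨nofun, id⟩,
    relAcyclic_of_forall_rel_lt (fun _ => 0) fun _ _ => False.elim⟩,
    fun θ => Subtype.ext <| funext₂ fun _ _ => propext ⟨θ.2.1.adj, False.elim⟩⟩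

section DeleteVertex

variable [Fintype V] (G : SimpleGraph V) [DecidableRel G.Adj] (v : V)

open Classical in
noncomputable def restrictWithInDegree :
    G.AcyclicOrientation → (G.deleteIncidenceSet v).AcyclicOrientation × Fin (G.degree v + 1) :=
  fun θ => (⟨fun a b => (G.deleteIncidenceSet v).Adj a b ∧ θ.1 a b,
      θ.2.1.restrict (G.deleteIncidenceSet_le v), θ.2.2.mono fun _ _ h => h.2⟩,
    ⟨#{u ∈ G.neighborFinset v | θ.1 u v}, Nat.lt_succ_of_le ((card_filter_le _ _).trans_eq
      (G.card_neighborFinset_eq_degree v))⟩)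

/-- Sort the vertices along `θ'`, then put `v` right after its first `j` neighbours. -/
theorem restrictWithInDegree_surjective : Surjective (G.restrictWithInDegree v) := by
  classical
  rintro ⟨θ', j, hj⟩
  obtain ⟨f, hf, hθf⟩ := θ'.2.2.exists_injective_forall_rel_lt
  obtain ⟨t, ht⟩ := exists_card_filter_lt_eq (G.neighborFinset v) hf.injOn
    (j := j) (by rw [card_neighborFinset_eq_degree]; omega)
  set g : V → ℕ := fun x => if x = v then 2 * t else 2 * f x + 1 with hg
  have g_lt_iff : ∀ {a b}, a ≠ v → b ≠ v → (g a < g b ↔ f a < f b) := fun ha hb => by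
    simp only [hg, if_neg ha, if_neg hb]; omega
  have g_inj : Injective g := fun a b hab => by
    simp only [hg] at hab
    split_ifs at hab with ha hb hb <;> first | exact ha.trans hb.symm | omega | exact hf (by omega)
  refine ⟨⟨G.inducedOrientation g, G.isOrientation_inducedOrientation g_inj,
    G.relAcyclic_inducedOrientation g⟩, Prod.ext (Subtype.ext ?_) (Fin.ext ?_)⟩
  · refine (θ'.2.1.eq_of_le ((G.isOrientation_inducedOrientation g_inj).restrict
      (G.deleteIncidenceSet_le v)) fun a b hab => ?_).symm
    have hadj := deleteIncidenceSet_adj.mp (θ'.2.1.adj hab)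
    exact ⟨θ'.2.1.adj hab, hadj.1, (g_lt_iff hadj.2.1 hadj.2.2).mpr (hθf a b hab)⟩
  · refine Eq.trans (congrArg card (filter_congr fun u hu => ?_)) ht
    have hu := (mem_neighborFinset G v u).mp hu
    simp only [inducedOrientation, hu.symm, true_and, hg, if_pos rfl, if_neg hu.ne']
    omega

theorem restrictWithInDegree_injective (hv : G.IsClique (G.neighborSet v)) :
    Injective (G.restrictWithInDegree v) := by
  classical
  intro θ₁ θ₂ h
  simp only [restrictWithInDegree, Prod.mk.injEq, Subtype.mk.injEq, Fin.mk.injEq] at h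
  obtain ⟨hres, hdeg⟩ := h
  have restrict_le : ∀ {a b}, a ≠ v → b ≠ v → θ₁.1 a b → θ₂.1 a b := fun {a b} ha hb hab =>
    (congrFun₂ hres a b ▸ ⟨deleteIncidenceSet_adj.mpr ⟨θ₁.2.1.adj hab, ha, hb⟩, hab⟩ :
      (G.deleteIncidenceSet v).Adj a b ∧ θ₂.1 a b).2
  -- A neighbour `u` entering `v` only under `θ₁` and a neighbour `w` entering `v` only under `θ₂`
  -- are adjacent, and either direction of the edge `uw` closes a triangle through `v`.
  have hin : {u ∈ G.neighborFinset v | θ₁.1 u v} = {u ∈ G.neighborFinset v | θ₂.1 u v} := by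
    by_contra hne
    obtain ⟨u, hu₁, hu₂⟩ := not_subset.mp fun h => hne (eq_of_subset_of_card_le h hdeg.ge)
    obtain ⟨w, hw₂, hw₁⟩ := not_subset.mp fun h => hne (eq_of_subset_of_card_le h hdeg.le).symm
    simp only [mem_filter, mem_neighborFinset, not_and] at hu₁ hu₂ hw₁ hw₂
    have huw : G.Adj u w := hv hu₁.1 hw₂.1 fun h => (h ▸ hw₁) hu₁.1 hu₁.2
    refine θ₂.not_rel_of_rel_of_not_rel hw₂.2 hu₁.1.symm (hu₂ hu₁.1) (restrict_le
      hu₁.1.ne' hw₂.1.ne' (θ₁.2.1.rel_of_not_rel huw ?_))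
    exact θ₁.not_rel_of_rel_of_not_rel hu₁.2 hw₂.1.symm (hw₁ hw₂.1)
  have mem_in : ∀ (θ : G.AcyclicOrientation) u,
      u ∈ {u ∈ G.neighborFinset v | θ.1 u v} ↔ θ.1 u v := fun θ u => by
    simpa [mem_filter] using fun h => (θ.2.1.adj h).symm
  refine Subtype.ext (θ₁.2.1.eq_of_le θ₂.2.1 fun a b hab => ?_)
  by_cases ha : a = v
  · subst ha
    have hb := (θ₁.2.1.adj hab).symm
    refine θ₂.2.1.rel_of_not_rel hb.symm fun hba => ?_
    exact ((θ₁.2.1 b a).1 hb).1 ((mem_in θ₁ b).mp (hin ▸ (mem_in θ₂ b).mpr hba)) hab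
  by_cases hb : b = v
  · subst hb
    exact (mem_in θ₂ a).mp (hin ▸ (mem_in θ₁ a).mpr hab)
  exact restrict_le ha hb hab

theorem succ_degree_mul_numAcyclicOrientations_deleteIncidenceSet_le :
    (G.degree v + 1) * numAcyclicOrientations (G.deleteIncidenceSet v) ≤
      numAcyclicOrientations G := by
  rw [mul_comm, numAcyclicOrientations, numAcyclicOrientations, ← Nat.card_fin (G.degree v + 1),
    ← Nat.card_prod]
  exact Nat.card_le_card_of_surjective _ (G.restrictWithInDegree_surjective v)

theorem numAcyclicOrientations_le_of_isClique_neighborSet (hv : G.IsClique (G.neighborSet v)) :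
    numAcyclicOrientations G ≤
      (G.degree v + 1) * numAcyclicOrientations (G.deleteIncidenceSet v) := by
  rw [mul_comm, numAcyclicOrientations, numAcyclicOrientations, ← Nat.card_fin (G.degree v + 1),
    ← Nat.card_prod]
  exact Nat.card_le_card_of_injective _ (G.restrictWithInDegree_injective v hv)

end DeleteVertex

end SimpleGraph

section GraphHnm

variable {n k r : ℕ}

theorem graphHnm_zero_zero : graphHnm n 0 0 = ⊥ := by
  ext a b; simp [graphHnm]

theorem graphHnm_succ_zero : graphHnm n (k + 1) 0 = graphHnm n k k := by
  ext a b; simp only [graphHnm]; omega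

theorem graphHnm_of_le (h : n ≤ k) : graphHnm n k r = graphHnm n k 0 := by
  ext a b; simp only [graphHnm]; omega

theorem graphHnm_deleteIncidenceSet (hk : k < n) :
    (graphHnm n k r).deleteIncidenceSet ⟨k, hk⟩ = graphHnm n k 0 := by
  ext a b; simp only [deleteIncidenceSet_adj, graphHnm, ne_eq, Fin.ext_iff]; omega

theorem neighborSet_graphHnm (hk : k < n) (hrk : r ≤ k) :
    (graphHnm n k r).neighborSet ⟨k, hk⟩ = {u | u.val < r} := by
  ext u
  simp only [mem_neighborSet, graphHnm, ne_eq, Fin.ext_iff, Set.mem_ofPred_eq, true_and]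
  omega

theorem numAcyclicOrientations_graphHnm_le_factorial_mul (hrk : r ≤ k) :
    numAcyclicOrientations (graphHnm n k r) ≤ k ! * (r + 1) := by
  classical
  induction k generalizing r with
  | zero => simp [Nat.le_zero.mp hrk, graphHnm_zero_zero, numAcyclicOrientations_bot]
  | succ k ih =>
    have clique_le : numAcyclicOrientations (graphHnm n (k + 1) 0) ≤ (k + 1) ! := by
      rw [graphHnm_succ_zero, Nat.factorial_succ, mul_comm]
      exact ih le_rfl
    by_cases hk : k + 1 < n
    · have hN := neighborSet_graphHnm hk hrk
      have hdeg : (graphHnm n (k + 1) r).degree ⟨k + 1, hk⟩ ≤ r := by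
        rw [← card_neighborSet_eq_degree, ← Set.toFinset_card]
        simp_rw [hN, Set.toFinset_ofPred]
        exact Fin.card_filter_val_lt.trans_le (min_le_right n r)
      have hclique : (graphHnm n (k + 1) r).IsClique {u : Fin n | u.val < r} :=
        fun a (ha : a.val < r) b (hb : b.val < r) hab => ⟨hab, Or.inl ⟨by omega, by omega⟩⟩
      calc numAcyclicOrientations (graphHnm n (k + 1) r)
          ≤ ((graphHnm n (k + 1) r).degree ⟨k + 1, hk⟩ + 1) *
              numAcyclicOrientations (graphHnm n (k + 1) 0) := by
            rw [← graphHnm_deleteIncidenceSet (r := r) hk]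
            exact numAcyclicOrientations_le_of_isClique_neighborSet _ _ (hN ▸ hclique)
        _ ≤ (r + 1) * (k + 1) ! := Nat.mul_le_mul (by omega) clique_le
        _ = (k + 1) ! * (r + 1) := mul_comm _ _
    · rw [graphHnm_of_le (not_lt.mp hk)]
      exact clique_le.trans (Nat.le_mul_of_pos_right _ r.succ_pos)

end GraphHnm

theorem Nat.succ_choose_two (k : ℕ) : (k + 1).choose 2 = k.choose 2 + k := by
  rw [Nat.choose_succ_succ', Nat.choose_one_right, add_comm]

theorem Nat.two_mul_choose_two_add_self (k : ℕ) : 2 * k.choose 2 + k = k * k := by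
  induction k with
  | zero => rfl
  | succ k ih => rw [Nat.succ_choose_two]; nlinarith

/-- The arithmetic of one induction step: deleting the `d` edges at a vertex of a graph with
`C(k,2) + r` edges. -/
theorem exists_factorial_mul_succ_le {k r d : ℕ} (hrk : r < k) (hd : 0 < d)
    (hdm : d * (d + 1) ≤ 2 * (k.choose 2 + r)) :
    ∃ k' r', r' < k' ∧ k'.choose 2 + r' = k.choose 2 + r - d ∧
      k ! * (r + 1) ≤ (d + 1) * (k' ! * (r' + 1)) := by
  have hdk : d < k := by
    have := Nat.two_mul_choose_two_add_self k
    nlinarith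
  obtain ⟨k, rfl⟩ : ∃ k', k = k' + 1 := ⟨k - 1, by omega⟩
  have hchoose := Nat.succ_choose_two k
  rcases le_or_gt d r with hdr | hrd
  · refine ⟨k + 1, r - d, by omega, by omega, ?_⟩
    have : r + 1 ≤ (d + 1) * (r - d + 1) := by
      obtain ⟨s, rfl⟩ := Nat.exists_eq_add_of_le hdr
      rw [Nat.add_sub_cancel_left]; nlinarith
    calc (k + 1)! * (r + 1) ≤ (k + 1)! * ((d + 1) * (r - d + 1)) := Nat.mul_le_mul_left _ this
      _ = (d + 1) * ((k + 1)! * (r - d + 1)) := by ring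
  · refine ⟨k, k + r - d, by omega, by omega, ?_⟩
    have : (k + 1) * (r + 1) ≤ (d + 1) * (k + r - d + 1) := by
      obtain ⟨s, rfl⟩ := Nat.exists_eq_add_of_le hrd
      obtain ⟨t, rfl⟩ := Nat.exists_eq_add_of_le (show r + 1 + s ≤ k by omega)
      rw [show r + 1 + s + t + r - (r + 1 + s) + 1 = t + r + 1 by omega]; nlinarith
    calc (k + 1)! * (r + 1) = (k + 1) * (r + 1) * k ! := by rw [Nat.factorial_succ]; ring
      _ ≤ (d + 1) * (k + r - d + 1) * k ! := Nat.mul_le_mul_right _ this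
      _ = (d + 1) * (k ! * (k + r - d + 1)) := by ring

namespace SimpleGraph

variable [Fintype V] [DecidableEq V] (G : SimpleGraph V) [DecidableRel G.Adj]

/-- A vertex `v` of least positive degree `d`: `v` and its `d` neighbours all have degree at
least `d`, so the degree sum `2 |E|` is at least `(d + 1) d`. -/
theorem exists_degree_pos_and_degree_mul_succ_le (hE : G.edgeFinset.Nonempty) :
    ∃ v, 0 < G.degree v ∧ G.degree v * (G.degree v + 1) ≤ 2 * #G.edgeFinset := by
  obtain ⟨e, he⟩ := hE
  induction e using Sym2.ind with | _ x y => ?_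
  have hx : x ∈ ({u | 0 < G.degree u} : Finset V) := by
    simpa using (G.degree_pos_iff_exists_adj x).mpr ⟨y, G.mem_edgeFinset.mp he⟩
  obtain ⟨v, hv, hmin⟩ := exists_min_image _ (fun u => G.degree u) ⟨x, hx⟩
  have hv : 0 < G.degree v := by simpa using hv
  refine ⟨v, hv, ?_⟩
  have hle : ∀ u ∈ insert v (G.neighborFinset v), G.degree v ≤ G.degree u := by
    simp only [mem_insert, mem_neighborFinset]
    rintro u (rfl | hu)
    · exact le_rfl
    · exact hmin u (by simpa using (G.degree_pos_iff_exists_adj u).mpr ⟨v, hu.symm⟩)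
  calc G.degree v * (G.degree v + 1) = #(insert v (G.neighborFinset v)) * G.degree v := by
        rw [card_insert_of_notMem (by simp), card_neighborFinset_eq_degree, mul_comm]
    _ ≤ ∑ u ∈ insert v (G.neighborFinset v), G.degree u := card_nsmul_le_sum _ _ _ hle
    _ ≤ ∑ u, G.degree u := sum_le_sum_of_subset (subset_univ _)
    _ = 2 * #G.edgeFinset := G.sum_degrees_eq_twice_card_edges

theorem factorial_mul_succ_le_numAcyclicOrientations {k r : ℕ} (hrk : r < k)
    (hG : #G.edgeFinset = k.choose 2 + r) : k ! * (r + 1) ≤ numAcyclicOrientations G := by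
  induction hm : #G.edgeFinset using Nat.strong_induction_on generalizing G k r with
  | _ m ih =>
  rcases G.edgeFinset.eq_empty_or_nonempty with hE | hE
  · obtain ⟨rfl, rfl⟩ : k = 1 ∧ r = 0 := by
      rw [hE, card_empty, eq_comm, Nat.add_eq_zero_iff, Nat.choose_eq_zero_iff] at hG
      omega
    simpa using G.one_le_numAcyclicOrientations
  obtain ⟨v, hv, hdeg⟩ := G.exists_degree_pos_and_degree_mul_succ_le hE
  obtain ⟨k', r', hrk', hG', hle⟩ := exists_factorial_mul_succ_le hrk hv (hG ▸ hdeg)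
  have hdel : #(G.deleteIncidenceSet v).edgeFinset < m := by
    rw [card_edgeFinset_deleteIncidenceSet, hm]
    have := hE.card_pos
    omega
  have hind : k' ! * (r' + 1) ≤ numAcyclicOrientations (G.deleteIncidenceSet v) :=
    ih _ hdel _ hrk' (by rw [card_edgeFinset_deleteIncidenceSet, hG, hG']) rfl
  calc k ! * (r + 1) ≤ (G.degree v + 1) * (k' ! * (r' + 1)) := hle
    _ ≤ (G.degree v + 1) * numAcyclicOrientations (G.deleteIncidenceSet v) :=
        Nat.mul_le_mul_left _ hind
    _ ≤ numAcyclicOrientations G := G.succ_degree_mul_numAcyclicOrientations_deleteIncidenceSet_le v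

end SimpleGraph

theorem numAcyclicOrientations_graphHnm_le_general (n m k r : ℕ)
    (hk1 : k * (k - 1) / 2 ≤ m) (hk2 : m < (k + 1) * k / 2) (hr : r = m - k * (k - 1) / 2)
    (G : SimpleGraph (Fin n)) (hG : Nat.card G.edgeSet = m) :
    numAcyclicOrientations (graphHnm n k r) ≤ numAcyclicOrientations G := by
  classical
  rw [← Nat.choose_two_right] at hk1 hr
  have hk2' : m < k.choose 2 + k := by
    have h := Nat.choose_two_right (k + 1)
    rw [Nat.add_sub_cancel, Nat.succ_choose_two] at h
    omega
  have hrk : r < k := by omega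
  calc numAcyclicOrientations (graphHnm n k r) ≤ k ! * (r + 1) :=
        numAcyclicOrientations_graphHnm_le_factorial_mul hrk.le
    _ ≤ numAcyclicOrientations G := G.factorial_mul_succ_le_numAcyclicOrientations hrk
        (by rw [edgeFinset_card, ← Nat.card_eq_fintype_card, hG]; omega)

/-- Among all graphs with `n` vertices and `m ≤ C(n,2)` edges, the graph `H_{n,m}` minimises
the number of acyclic orientations: `a(G) ≥ a(H_{n,m})`. -/
theorem numAcyclicOrientations_graphHnm_le (n m k r : ℕ) (hm : m ≤ n * (n - 1) / 2)
    (hk1 : k * (k - 1) / 2 ≤ m) (hk2 : m < (k + 1) * k / 2) (hr : r = m - k * (k - 1) / 2)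
    (G : SimpleGraph (Fin n)) (hG : Nat.card G.edgeSet = m) :
    numAcyclicOrientations (graphHnm n k r) ≤ numAcyclicOrientations G :=
  numAcyclicOrientations_graphHnm_le_general n m k r hk1 hk2 hr G hG
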